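/- Let L be the generator Lf = (σ²/2)f'' − cσ f' and m_t(x) the explicit solution above. Then for f ∈ C²_b, the spinal generator 𝒢_t f(x) = (L(m_{T−t} f)(x) − f(x) L m_{T−t}(x))/m_{T−t}(x) equals (σ²/2) f''(x) − σ x tanh(σ(T−t)) f'(x) − (σc/cosh(σ(T−t))) f'(x). -/

import Mathlib

/-! Writing `m = m_{T-t}`, the numerator `L(m f) - f L m` is `m L f + σ² m' f'` (the carré du
champ of `L`), so the spinal generator is `L f + σ² (log m)' f'`. The logarithm of `m` is a
quadratic polynomial in `x`, and its derivative `((x + c) - (x + e^{-σs} c)(1 + tanh σs))/σ`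
turns the drift into the claimed one through `e^{-u} (1 + tanh u) = 1 / cosh u`. -/

open Real

section Generator

variable {𝕜 : Type*} [NontriviallyNormedField 𝕜]

noncomputable def diffusionGenerator (a b : 𝕜) (g : 𝕜 → 𝕜) (x : 𝕜) : 𝕜 :=
  a * deriv (deriv g) x - b * deriv g x

theorem deriv_deriv_mul {M f : 𝕜 → 𝕜} {x : 𝕜} (hM : Differentiable 𝕜 M)
    (hf : Differentiable 𝕜 f) (hM' : DifferentiableAt 𝕜 (deriv M) x)
    (hf' : DifferentiableAt 𝕜 (deriv f) x) :
    deriv (deriv fun y => M y * f y) x =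
      deriv (deriv M) x * f x + 2 * deriv M x * deriv f x + M x * deriv (deriv f) x := by
  have hderiv : deriv (fun y => M y * f y) = fun y => deriv M y * f y + M y * deriv f y :=
    funext fun y => deriv_fun_mul (hM y) (hf y)
  rw [hderiv, ((hM'.hasDerivAt.fun_mul (hf x).hasDerivAt).fun_add
    ((hM x).hasDerivAt.fun_mul hf'.hasDerivAt)).deriv]
  ring

theorem diffusionGenerator_mul_sub {M f : 𝕜 → 𝕜} {x : 𝕜} (a b : 𝕜) (hM : Differentiable 𝕜 M)
    (hf : Differentiable 𝕜 f) (hM' : DifferentiableAt 𝕜 (deriv M) x)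
    (hf' : DifferentiableAt 𝕜 (deriv f) x) :
    diffusionGenerator a b (fun y => M y * f y) x - f x * diffusionGenerator a b M x =
      M x * diffusionGenerator a b f x + 2 * a * deriv M x * deriv f x := by
  simp only [diffusionGenerator, deriv_deriv_mul hM hf hM' hf', deriv_fun_mul (hM x) (hf x)]
  ring

end Generator

theorem one_add_tanh (u : ℝ) : 1 + tanh u = exp u / cosh u := by
  rw [tanh_eq_sinh_div_cosh, ← cosh_add_sinh, add_div, div_self (cosh_pos u).ne']

theorem exp_neg_mul_one_add_tanh_mul_cosh (u : ℝ) : exp (-u) * (1 + tanh u) * cosh u = 1 := by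
  rw [one_add_tanh, mul_div_assoc', div_mul_cancel₀ _ (cosh_pos u).ne', ← exp_add, neg_add_cancel,
    exp_zero]

theorem hasDerivAt_gaussian_exponent (σ B K c y : ℝ) :
    HasDerivAt (fun z => -((z + B) ^ 2 / (2 * σ)) * K + (z + c) ^ 2 / (2 * σ))
      (((y + c) - (y + B) * K) / σ) y := by
  have hB := ((hasDerivAt_id' y).add_const B).fun_pow 2
  have hc := ((hasDerivAt_id' y).add_const c).fun_pow 2
  refine (((hB.div_const (2 * σ)).fun_neg.mul_const K).fun_add
    (hc.div_const (2 * σ))).congr_deriv ?_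
  simp only [Nat.cast_ofNat]
  ring

theorem spinal_generator_explicit_general (σ c T t : ℝ) (hσ : 0 < σ)
    (m : ℝ → ℝ → ℝ)
    (hm : ∀ s x, m s x =
      Real.sqrt (1 + Real.tanh (σ * s)) *
        Real.exp (-((x + Real.exp (-σ * s) * c) ^ 2 / (2 * σ)) * (1 + Real.tanh (σ * s))
          + (x + c) ^ 2 / (2 * σ)))
    (L : (ℝ → ℝ) → ℝ → ℝ)
    (hL : ∀ g x, L g x = σ ^ 2 / 2 * deriv (deriv g) x - c * σ * deriv g x)
    (f : ℝ → ℝ) (hf : ContDiff ℝ 2 f) :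
    ∀ x : ℝ,
      (L (fun y => m (T - t) y * f y) x - f x * L (m (T - t)) x) / m (T - t) x
        = σ ^ 2 / 2 * deriv (deriv f) x
            - σ * x * Real.tanh (σ * (T - t)) * deriv f x
            - σ * c / Real.cosh (σ * (T - t)) * deriv f x := by
  intro x
  set s := T - t
  set K := 1 + tanh (σ * s) with hK_def
  set B := exp (-σ * s) * c
  have hBK : B * K * cosh (σ * s) = c := by
    simp only [B, K, neg_mul]
    linear_combination c * exp_neg_mul_one_add_tanh_mul_cosh (σ * s)
  have hm_deriv : ∀ y, HasDerivAt (m s) (m s y * (((y + c) - (y + B) * K) / σ)) y := by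
    intro y
    rw [funext (hm s)]
    exact ((hasDerivAt_gaussian_exponent σ B K c y).exp.const_mul _).congr_deriv (by ring)
  have hm_pos : 0 < m s x := by
    rw [hm]
    exact mul_pos (sqrt_pos.mpr (by linarith [neg_one_lt_tanh (σ * s)])) (exp_pos _)
  have hm_diff : Differentiable ℝ (m s) := fun y => (hm_deriv y).differentiableAt
  have hm_diff' : DifferentiableAt ℝ (deriv (m s)) x := by
    rw [funext fun y => (hm_deriv y).deriv]
    fun_prop
  rw [show L = diffusionGenerator (σ ^ 2 / 2) (c * σ) from funext₂ hL,
    diffusionGenerator_mul_sub _ _ hm_diff (hf.differentiable two_ne_zero) hm_diff'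
      (hf.differentiable_deriv_two x),
    (hm_deriv x).deriv, diffusionGenerator, div_eq_iff hm_pos.ne']
  field_simp
  linear_combination (-2 * deriv f x) * hBK + 2 * deriv f x * x * cosh (σ * s) * hK_def

theorem spinal_generator_explicit (σ c T t : ℝ) (hσ : 0 < σ) (hT : 0 < T)
    (ht : 0 ≤ t) (htT : t ≤ T)
    (m : ℝ → ℝ → ℝ)
    (hm : ∀ s x, m s x =
      Real.sqrt (1 + Real.tanh (σ * s)) *
        Real.exp (-((x + Real.exp (-σ * s) * c) ^ 2 / (2 * σ)) * (1 + Real.tanh (σ * s))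
          + (x + c) ^ 2 / (2 * σ)))
    (L : (ℝ → ℝ) → ℝ → ℝ)
    (hL : ∀ g x, L g x = σ ^ 2 / 2 * deriv (deriv g) x - c * σ * deriv g x)
    (f : ℝ → ℝ) (hf : ContDiff ℝ 2 f) :
    ∀ x : ℝ,
      (L (fun y => m (T - t) y * f y) x - f x * L (m (T - t)) x) / m (T - t) x
        = σ ^ 2 / 2 * deriv (deriv f) x
            - σ * x * Real.tanh (σ * (T - t)) * deriv f x
            - σ * c / Real.cosh (σ * (T - t)) * deriv f x :=
  spinal_generator_explicit_general σ c T t hσ m hm L hL f hf
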